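/- For all integers n ≥ 1 and k ≥ 0, the 2-creation rook number of the staircase board equals the k-matching number of the complete graph on n+k−1 vertices: r_k^{(2)}(St_n) = binomial(n+k−1, 2k) · (2k)! / (k! · 2^k). -/

import Mathlib

open scoped BigOperators Classical

noncomputable section
namespace EllRook

/-- Modified Jacobi theta function `θ(x;p)`. -/
def theta (x p : ℂ) : ℂ := ∏' j : ℕ, ((1 - p ^ j * x) * (1 - p ^ (j + 1) / x))

/-- Elliptic small weight `w_{a,b;q,p}(k)`. -/
def ew (a b q p : ℂ) (k : ℤ) : ℂ :=
  q * (theta (a * q ^ (2 * k + 1)) p * theta (b * q ^ k) p * theta (a * q ^ (k - 2) / b) p) /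
    (theta (a * q ^ (2 * k - 1)) p * theta (b * q ^ (k + 2)) p * theta (a * q ^ k / b) p)

/-- Elliptic big weight `W_{a,b;q,p}(k)`. -/
def eW (a b q p : ℂ) (k : ℤ) : ℂ :=
  q ^ k *
      (theta (a * q ^ (1 + 2 * k)) p * theta (b * q) p * theta (b * q ^ (2 : ℤ)) p *
        theta (a * q ^ (-1 : ℤ) / b) p * theta (a / b) p) /
    (theta (a * q) p * theta (b * q ^ (k + 1)) p * theta (b * q ^ (k + 2)) p *
      theta (a * q ^ (k - 1) / b) p * theta (a * q ^ k / b) p)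

/-- Elliptic number `[m]_{a,b;q,p}`. -/
def en (a b q p : ℂ) (m : ℤ) : ℂ :=
  (theta (q ^ m) p * theta (a * q ^ m) p * theta (b * q ^ (2 : ℤ)) p * theta (a / b) p) /
    (theta q p * theta (a * q) p * theta (b * q ^ (m + 1)) p * theta (a * q ^ (m - 1) / b) p)

/-- The q-number `[m]_q` for an integer `m`. -/
def qInt (q : ℂ) (m : ℤ) : ℂ := (1 - q ^ m) / (1 - q)

/-- The Q-shifted factorial `(x;Q)_m`. -/
def qPoch (x Q : ℂ) (m : ℕ) : ℂ := ∏ i ∈ Finset.range m, (1 - x * Q ^ i)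

/-- The q-binomial coefficient. -/
def qBinom (q : ℂ) (n k : ℕ) : ℂ :=
  ∏ i ∈ Finset.Icc 1 k, (1 - q ^ ((n : ℤ) - (k : ℤ) + (i : ℤ))) / (1 - q ^ (i : ℤ))

/-- The a;q-number `[m]_{x;q}`. -/
def aqNum (x q : ℂ) (m : ℤ) : ℂ :=
  q ^ (1 - m) * (1 - q ^ m) * (1 - x * q ^ m) / ((1 - q) * (1 - x * q))

/-- The a;q big weight `W_{x;q}(k)`. -/
def aqW (x q : ℂ) (k : ℤ) : ℂ := q ^ (-k) * (1 - x * q ^ (1 + 2 * k)) / (1 - x * q)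

/-- The a;q small weight `w_{a;q}(k)`. -/
def waq (a q : ℂ) (k : ℤ) : ℂ := q⁻¹ * (1 - a * q ^ (2 * k + 1)) / (1 - a * q ^ (2 * k - 1))

/-! Ferrers boards and file placements (alpha-parameter model).
Cells are written `(i, j)` for column `i` (from the left) and row `j` (from the bottom),
both `1`-indexed. -/

/-- The board `B(h 1, …, h n)`: cells `(i,j)` with `1 ≤ i ≤ n`, `1 ≤ j ≤ h i`. -/
def ferrers (n : ℕ) (h : ℕ → ℕ) : Finset (ℕ × ℕ) :=
  ((Finset.Icc 1 n) ×ˢ (Finset.Icc 1 ((Finset.Icc 1 n).sup h))).filter fun c => c.2 ≤ h c.1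

/-- `k`-file placements on a board: `k` cells, at most one per column. -/
def filePl (B : Finset (ℕ × ℕ)) (k : ℕ) : Finset (Finset (ℕ × ℕ)) :=
  B.powerset.filter fun P => P.card = k ∧ ∀ c ∈ P, ∀ d ∈ P, c.1 = d.1 → c = d

/-- `v(c)`: number of cells of `P` strictly to the left of `c` in the same row. -/
def vP (P : Finset (ℕ × ℕ)) (c : ℕ × ℕ) : ℕ := (P.filter fun d => d.1 < c.1 ∧ d.2 = c.2).card

/-- `r_c(P)`: number of cells of `P` strictly to the left of and strictly above `c`. -/
def rcP (P : Finset (ℕ × ℕ)) (c : ℕ × ℕ) : ℕ := (P.filter fun d => d.1 < c.1 ∧ c.2 < d.2).card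

/-- Elliptic weight of a cell in the alpha-parameter model. -/
def cellWt (a b q p : ℂ) (α : ℤ) (P : Finset (ℕ × ℕ)) (c : ℕ × ℕ) : ℂ :=
  if ∃ d ∈ P, d.1 = c.1 ∧ c.2 < d.2 then 1
  else
    if c ∈ P then
      en (a * q ^ (2 * (-(c.2 : ℤ) + (α - 1) * (1 - (c.1 : ℤ) + (rcP P c : ℤ)))))
        (b * q ^ (-(c.2 : ℤ) + (α - 1) * (1 - (c.1 : ℤ) + (rcP P c : ℤ)))) q p
        ((α - 1) * (vP P c : ℤ) + 1)
    else
      eW (a * q ^ (2 * (-(c.2 : ℤ) + (α - 1) * (1 - (c.1 : ℤ) + (rcP P c : ℤ)))))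
        (b * q ^ (-(c.2 : ℤ) + (α - 1) * (1 - (c.1 : ℤ) + (rcP P c : ℤ)))) q p
        ((α - 1) * (vP P c : ℤ) + 1)

/-- The elliptic alpha-parameter rook number `r_k^{(α)}(a,b;q,p;B)` for the board with
`n` columns of heights `h 1, …, h n`; it is `0` for `k < 0`. -/
def rAlpha (a b q p : ℂ) (α : ℤ) (n : ℕ) (h : ℕ → ℕ) (k : ℤ) : ℂ :=
  if 0 ≤ k then
    ∑ P ∈ filePl (ferrers n h) k.toNat, ∏ c ∈ ferrers n h, cellWt a b q p α P c
  else 0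

/-- q-weight of a cell in the alpha-parameter model. -/
def qCellWt (q : ℂ) (α : ℤ) (P : Finset (ℕ × ℕ)) (c : ℕ × ℕ) : ℂ :=
  if ∃ d ∈ P, d.1 = c.1 ∧ c.2 < d.2 then 1
  else if c ∈ P then qInt q ((α - 1) * (vP P c : ℤ) + 1)
  else q ^ ((α - 1) * (vP P c : ℤ) + 1)

/-- The q-analogue `R_k^{(α)}(q;B)` of the alpha-parameter rook numbers. -/
def Rq (q : ℂ) (α : ℤ) (n : ℕ) (h : ℕ → ℕ) (k : ℕ) : ℂ :=
  ∑ P ∈ filePl (ferrers n h) k, ∏ c ∈ ferrers n h, qCellWt q α P c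

/-- a;q-weight of a cell in the α = 2 model. -/
def aqCellWt (a q : ℂ) (P : Finset (ℕ × ℕ)) (c : ℕ × ℕ) : ℂ :=
  if ∃ d ∈ P, d.1 = c.1 ∧ c.2 < d.2 then 1
  else
    if c ∈ P then
      aqNum (a * q ^ (2 * (-(c.2 : ℤ) + 1 - (c.1 : ℤ) + (rcP P c : ℤ)))) q ((vP P c : ℤ) + 1)
    else
      aqW (a * q ^ (2 * (-(c.2 : ℤ) + 1 - (c.1 : ℤ) + (rcP P c : ℤ)))) q ((vP P c : ℤ) + 1)

/-- Heights of the staircase board `St_n = B(0,1,…,n-1)`. -/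
def stH : ℕ → ℕ := fun i => i - 1

/-- `r_k^{(2)}(a,q;St_n)`. -/
def r2aq (a q : ℂ) (n k : ℕ) : ℂ :=
  ∑ P ∈ filePl (ferrers n stH) k, ∏ c ∈ ferrers n stH, aqCellWt a q P c

/-- The 2-creation rook number `r_k^{(2)}(St_n)` of the staircase board. -/
def r2Nat (n k : ℕ) : ℕ :=
  ∑ P ∈ filePl (ferrers n stH) k,
    ∏ r ∈ Finset.Icc 1 n, (P.filter fun c => c.2 = r).card.factorial

/-! l-shifted boards and rook theory for matchings.
Cells are written `(i, j)` for row `i` and column `j` in the original labelling. -/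

/-- `L j = l 1 + ⋯ + l j`. -/
def Lsum (l : ℕ → ℕ) (j : ℕ) : ℕ := ∑ s ∈ Finset.Icc 1 j, l s

/-- The l-shifted skyline/Ferrers board `B(A 1, …, A N) ⊆ B_N^l`. -/
def lFerrers (N : ℕ) (l A : ℕ → ℕ) : Finset (ℕ × ℕ) :=
  (Finset.Icc 1 N).biUnion fun i =>
    (Finset.Icc 1 (A i)).image fun j =>
      (Lsum l N - Lsum l (N - i + 1) + 1, Lsum l N - Lsum l (N - i + 1) + 1 + j)

/-- Nonattacking condition for rook placements on shifted boards. -/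
def nonatt (P : Finset (ℕ × ℕ)) : Prop :=
  ∀ c ∈ P, ∀ d ∈ P, c ≠ d → c.1 ≠ d.1 ∧ c.2 ≠ d.2 ∧ c.2 ≠ d.1 ∧ d.2 ≠ c.1

/-- `M_k(B)`: placements of `k` nonattacking rooks on `B`. -/
def Mk (B : Finset (ℕ × ℕ)) (k : ℕ) : Finset (Finset (ℕ × ℕ)) :=
  B.powerset.filter fun P => P.card = k ∧ nonatt P

/-- A rook at `(i,j) ∈ P` cancels the cells `(i,s)` with `i < s < j` and the cells
`(t,j)` and `(t,i)` with `t < i`. -/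
def cancelled (P : Finset (ℕ × ℕ)) (c : ℕ × ℕ) : Prop :=
  ∃ d ∈ P, (d.1 = c.1 ∧ d.1 < c.2 ∧ c.2 < d.2) ∨ (c.1 < d.1 ∧ (c.2 = d.2 ∨ c.2 = d.1))

/-- The cells of `B` neither in `P` nor cancelled by a rook of `P`. -/
def uncancelled (B P : Finset (ℕ × ℕ)) : Finset (ℕ × ℕ) :=
  B.filter fun c => c ∉ P ∧ ¬cancelled P c

/-- `m_k(q;B) = Σ_P q^{u_B(P)}`. -/
def mq (q : ℂ) (B : Finset (ℕ × ℕ)) (k : ℕ) : ℂ :=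
  ∑ P ∈ Mk B k, q ^ (uncancelled B P).card

/-- The w-row (bottom-to-top index) of the original row labelled `r` in `B_N^l`:
rows are labelled `L_N + 1 - L_{i'}` for the w-row `i'`. -/
def wRow (N : ℕ) (l : ℕ → ℕ) (r : ℕ) : ℕ :=
  ((Finset.Icc 1 N).filter fun t => Lsum l t ≤ Lsum l N + 1 - r).card

/-- Number of rooks south-east of `c` both of whose cancelled columns are to the right of
the w-column of `c` (in original coordinates: row and column larger than those of `c`,
and the rook's own row label, as a column, also larger than the column of `c`). -/
def rse (P : Finset (ℕ × ℕ)) (c : ℕ × ℕ) : ℕ :=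
  (P.filter fun d => c.1 < d.1 ∧ c.2 < d.2 ∧ c.2 < d.1).card

/-- Number of rooks south-east of `c` exactly one of whose cancelled columns is to the
right of the w-column of `c`. -/
def sse (P : Finset (ℕ × ℕ)) (c : ℕ × ℕ) : ℕ :=
  (P.filter fun d => c.1 < d.1 ∧ c.2 < d.2 ∧ d.1 ≤ c.2).card

/-- The elliptic matchings number `m_k^{(l)}(a,b;q,p;B)`: for a cell of `B_N^l`
in original coordinates `(r,c)`, its w-coordinates are `i = wRow N l r` and
`j = L_N + 2 - c`, and the uncancelled cells get the small weight with argument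
`i + j - 1 - l i - 2 r_{(i,j)}(P) - s_{(i,j)}(P)`. -/
def mEll (a b q p : ℂ) (N : ℕ) (l : ℕ → ℕ) (B : Finset (ℕ × ℕ)) (k : ℕ) : ℂ :=
  ∑ P ∈ Mk B k, ∏ c ∈ uncancelled B P,
    ew a b q p ((wRow N l c.1 : ℤ) + ((Lsum l N : ℤ) + 2 - (c.2 : ℤ)) - 1
      - (l (wRow N l c.1) : ℤ) - 2 * (rse P c : ℤ) - (sse P c : ℤ))

/-- The a;q-analogue `m_k(a,q;B)` of the matchings number. -/
def mAq (a q : ℂ) (N : ℕ) (l : ℕ → ℕ) (B : Finset (ℕ × ℕ)) (k : ℕ) : ℂ :=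
  ∑ P ∈ Mk B k, ∏ c ∈ uncancelled B P,
    waq a q ((wRow N l c.1 : ℤ) + ((Lsum l N : ℤ) + 2 - (c.2 : ℤ)) - 1
      - (l (wRow N l c.1) : ℤ) - 2 * (rse P c : ℤ) - (sse P c : ℤ))

/-! Removing the cell in the last column gives the recurrence
`r_{k+1}(St_{n+1}) = r_{k+1}(St_n) + (n + k) r_k(St_n)`: a cell added in row `j` of column
`n + 1` multiplies the weight `∏ u_r!` by `u_j + 1`, and over the `n` rows these factors add up
to `k + n`. With `N = n + k - 1` this is the recurrence
`m_{k+1}(N + 2) = m_{k+1}(N + 1) + (N + 1) m_k(N)` for the number of `k`-matchings of `K_N`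
(the last vertex is either unmatched or matched to one of the others), which is solved by
`N.descFactorial (2 k) / (k! 2^k)`. -/

open Finset Nat

section FilePlacements

variable {n k : ℕ} {h : ℕ → ℕ}

lemma mem_ferrers {c : ℕ × ℕ} :
    c ∈ ferrers n h ↔ (1 ≤ c.1 ∧ c.1 ≤ n) ∧ 1 ≤ c.2 ∧ c.2 ≤ h c.1 := by
  simp only [ferrers, mem_filter, mem_product, mem_Icc]
  constructor
  · rintro ⟨⟨hcol, hrow, -⟩, hle⟩
    exact ⟨hcol, hrow, hle⟩
  · rintro ⟨hcol, hrow, hle⟩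
    exact ⟨⟨hcol, hrow, hle.trans (le_sup (mem_Icc.mpr hcol))⟩, hle⟩

lemma ferrers_zero : ferrers 0 h = ∅ := by
  ext c
  simp only [mem_ferrers, notMem_empty, iff_false]
  omega

lemma ferrers_subset_ferrers_succ : ferrers n h ⊆ ferrers (n + 1) h := fun c hc => by
  rw [mem_ferrers] at hc ⊢
  omega

lemma mem_filePl {B P : Finset (ℕ × ℕ)} :
    P ∈ filePl B k ↔ P ⊆ B ∧ P.card = k ∧ ∀ c ∈ P, ∀ d ∈ P, c.1 = d.1 → c = d := by
  simp [filePl]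

lemma filePl_zero (B : Finset (ℕ × ℕ)) : filePl B 0 = {∅} := by
  ext P
  simp only [mem_filePl, mem_singleton, Finset.card_eq_zero]
  constructor
  · exact fun hP => hP.2.1
  · rintro rfl
    simp

lemma filePl_empty_succ : filePl ∅ (k + 1) = ∅ := by
  ext P
  simp only [mem_filePl, subset_empty, notMem_empty, iff_false]
  rintro ⟨rfl, hcard, -⟩
  simp at hcard

lemma filter_filePl_ferrers_succ_col_le :
    (filePl (ferrers (n + 1) h) k).filter (fun P => ∀ c ∈ P, c.1 ≤ n) = filePl (ferrers n h) k := by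
  ext P
  simp only [mem_filter, mem_filePl]
  constructor
  · rintro ⟨⟨hsub, hcard, hcol⟩, hle⟩
    refine ⟨fun c hc => ?_, hcard, hcol⟩
    have := mem_ferrers.mp (hsub hc)
    exact mem_ferrers.mpr ⟨⟨this.1.1, hle c hc⟩, this.2⟩
  · rintro ⟨hsub, hcard, hcol⟩
    exact ⟨⟨hsub.trans ferrers_subset_ferrers_succ, hcard, hcol⟩,
      fun c hc => (mem_ferrers.mp (hsub hc)).1.2⟩

lemma insert_mem_filePl_ferrers_succ {P : Finset (ℕ × ℕ)} {j : ℕ}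
    (hP : P ∈ filePl (ferrers n h) k) (hj : j ∈ Icc 1 (h (n + 1))) :
    insert (n + 1, j) P ∈ filePl (ferrers (n + 1) h) (k + 1) := by
  obtain ⟨hsub, hcard, hcol⟩ := mem_filePl.mp hP
  have hle : ∀ c ∈ P, c.1 ≤ n := fun c hc => (mem_ferrers.mp (hsub hc)).1.2
  have hnotMem : (n + 1, j) ∉ P := fun hmem => by simpa using hle _ hmem
  rw [mem_Icc] at hj
  refine mem_filePl.mpr ⟨?_, by rw [card_insert_of_notMem hnotMem, hcard], ?_⟩
  · exact insert_subset (mem_ferrers.mpr ⟨by omega, hj⟩) (hsub.trans ferrers_subset_ferrers_succ)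
  · intro c hc d hd hcd
    rcases mem_insert.mp hc with rfl | hc <;> rcases mem_insert.mp hd with rfl | hd
    · rfl
    · exact absurd hcd (by have := hle _ hd; omega)
    · exact absurd hcd (by have := hle _ hc; omega)
    · exact hcol c hc d hd hcd

lemma filter_col_le_insert_col_succ {P : Finset (ℕ × ℕ)} (j : ℕ) (hP : ∀ c ∈ P, c.1 ≤ n) :
    (insert (n + 1, j) P).filter (fun c => c.1 ≤ n) = P := by
  rw [filter_insert, if_neg (by omega), filter_true_of_mem hP]

lemma erase_mem_filePl_ferrers {P : Finset (ℕ × ℕ)} {c : ℕ × ℕ}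
    (hP : P ∈ filePl (ferrers (n + 1) h) (k + 1)) (hc : c ∈ P) (hc1 : c.1 = n + 1) :
    P.erase c ∈ filePl (ferrers n h) k := by
  obtain ⟨hsub, hcard, hcol⟩ := mem_filePl.mp hP
  refine mem_filePl.mpr ⟨fun d hd => ?_, by rw [card_erase_of_mem hc, hcard, Nat.add_sub_cancel],
    fun a ha b hb => hcol a (mem_of_mem_erase ha) b (mem_of_mem_erase hb)⟩
  have hdB := mem_ferrers.mp (hsub (mem_of_mem_erase hd))
  have hdn : d.1 ≠ n + 1 := fun hd1 =>
    ne_of_mem_erase hd (hcol d (mem_of_mem_erase hd) c hc (hd1.trans hc1.symm))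
  exact mem_ferrers.mpr ⟨⟨hdB.1.1, by omega⟩, hdB.2⟩

lemma sum_filter_filePl_ferrers_succ_last_col {M : Type*} [AddCommMonoid M]
    (f : Finset (ℕ × ℕ) → M) :
    ∑ P ∈ (filePl (ferrers (n + 1) h) (k + 1)).filter (fun P => ¬ ∀ c ∈ P, c.1 ≤ n), f P
      = ∑ P ∈ filePl (ferrers n h) k, ∑ j ∈ Icc 1 (h (n + 1)), f (insert (n + 1, j) P) := by
  have hle : ∀ P ∈ filePl (ferrers n h) k, ∀ c ∈ P, c.1 ≤ n :=
    fun P hP c hc => (mem_ferrers.mp ((mem_filePl.mp hP).1 hc)).1.2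
  rw [← sum_product']
  refine (sum_bij (fun x _ => insert (n + 1, x.2) x.1) ?_ ?_ ?_ fun _ _ => rfl).symm
  · rintro ⟨P, j⟩ hx
    rw [mem_product] at hx
    refine mem_filter.mpr ⟨insert_mem_filePl_ferrers_succ hx.1 hx.2, fun hall => ?_⟩
    simpa using hall _ (mem_insert_self _ _)
  · rintro ⟨P₁, j₁⟩ hx₁ ⟨P₂, j₂⟩ hx₂ heq
    simp only [mem_product] at hx₁ hx₂ heq
    obtain rfl : P₁ = P₂ := by
      rw [← filter_col_le_insert_col_succ j₁ (hle _ hx₁.1),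
        ← filter_col_le_insert_col_succ j₂ (hle _ hx₂.1), heq]
    have hmem : (n + 1, j₁) ∈ insert (n + 1, j₂) P₁ := heq ▸ mem_insert_self _ _
    rcases mem_insert.mp hmem with hj | hmem
    · rw [(Prod.mk.inj hj).2]
    · simpa using hle _ hx₁.1 _ hmem
  · intro P hP
    obtain ⟨hP, hlastCol⟩ := mem_filter.mp hP
    simp only [not_forall, not_le] at hlastCol
    obtain ⟨c, hc, hcn⟩ := hlastCol
    have hcB := mem_ferrers.mp ((mem_filePl.mp hP).1 hc)
    have hc1 : c.1 = n + 1 := by omega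
    refine ⟨(P.erase c, c.2), mem_product.mpr ⟨erase_mem_filePl_ferrers hP hc hc1, ?_⟩, ?_⟩
    · rw [mem_Icc, ← hc1]
      exact hcB.2
    · dsimp only
      rw [← hc1, insert_erase hc]

lemma sum_filePl_ferrers_succ {M : Type*} [AddCommMonoid M] (f : Finset (ℕ × ℕ) → M) :
    ∑ P ∈ filePl (ferrers (n + 1) h) (k + 1), f P
      = ∑ P ∈ filePl (ferrers n h) (k + 1), f P
        + ∑ P ∈ filePl (ferrers n h) k, ∑ j ∈ Icc 1 (h (n + 1)), f (insert (n + 1, j) P) := by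
  rw [← sum_filter_add_sum_filter_not _ (fun P => ∀ c ∈ P, c.1 ≤ n),
    filter_filePl_ferrers_succ_col_le, sum_filter_filePl_ferrers_succ_last_col]

end FilePlacements

section RowFactorialProd

def rowFactorialProd (m : ℕ) (P : Finset (ℕ × ℕ)) : ℕ :=
  ∏ r ∈ Icc 1 m, (P.filter fun c => c.2 = r).card !

variable {m : ℕ} {P : Finset (ℕ × ℕ)}

lemma rowFactorialProd_of_le {m' : ℕ} (hm : m ≤ m') (hP : ∀ c ∈ P, c.2 ≤ m) :
    rowFactorialProd m' P = rowFactorialProd m P := by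
  refine (prod_subset (Icc_subset_Icc_right hm) fun r hr hrm => ?_).symm
  rw [filter_eq_empty_iff.mpr fun c hc hcr => ?_, card_empty, factorial_zero]
  have := hP c hc
  simp only [mem_Icc] at hr hrm
  omega

lemma rowFactorialProd_insert {c : ℕ × ℕ} (hc : c ∉ P) (hrow : c.2 ∈ Icc 1 m) :
    rowFactorialProd m (insert c P)
      = ((P.filter fun d => d.2 = c.2).card + 1) * rowFactorialProd m P := by
  have hcRow : c ∉ P.filter (fun d => d.2 = c.2) := fun h => hc (mem_filter.mp h).1
  have hOther : ∀ r ∈ (Icc 1 m).erase c.2,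
      ((insert c P).filter fun d => d.2 = r).card ! = (P.filter fun d => d.2 = r).card ! :=
    fun r hr => by rw [filter_insert, if_neg (Ne.symm (ne_of_mem_erase hr))]
  rw [rowFactorialProd, rowFactorialProd, ← mul_prod_erase _ _ hrow, ← mul_prod_erase _ _ hrow,
    prod_congr rfl hOther, filter_insert, if_pos rfl, card_insert_of_notMem hcRow,
    factorial_succ, mul_assoc]

lemma sum_card_filter_row_add_one (hP : ∀ c ∈ P, c.2 ∈ Icc 1 m) :
    ∑ j ∈ Icc 1 m, ((P.filter fun d => d.2 = j).card + 1) = P.card + m := by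
  rw [sum_add_distrib, ← card_eq_sum_card_fiberwise hP, sum_const, card_Icc, smul_eq_mul,
    mul_one, Nat.add_sub_cancel]

end RowFactorialProd

lemma mem_ferrers_stH {n : ℕ} {c : ℕ × ℕ} :
    c ∈ ferrers n stH ↔ c.1 ≤ n ∧ 1 ≤ c.2 ∧ c.2 + 1 ≤ c.1 := by
  rw [mem_ferrers, stH]
  omega

lemma r2Nat_eq_sum_rowFactorialProd (n k : ℕ) :
    r2Nat n k = ∑ P ∈ filePl (ferrers n stH) k, rowFactorialProd n P := rfl

lemma r2Nat_zero_right (n : ℕ) : r2Nat n 0 = 1 := by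
  simp [r2Nat_eq_sum_rowFactorialProd, filePl_zero, rowFactorialProd]

lemma r2Nat_zero_succ (k : ℕ) : r2Nat 0 (k + 1) = 0 := by
  simp [r2Nat_eq_sum_rowFactorialProd, ferrers_zero, filePl_empty_succ]

lemma r2Nat_succ_succ (n k : ℕ) :
    r2Nat (n + 1) (k + 1) = r2Nat n (k + 1) + (n + k) * r2Nat n k := by
  have hrows : ∀ P ∈ filePl (ferrers n stH) k, ∀ c ∈ P, c.2 ∈ Icc 1 n := fun P hP c hc => by
    have := mem_ferrers_stH.mp ((mem_filePl.mp hP).1 hc)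
    exact mem_Icc.mpr (by omega)
  have hrows' : ∀ P ∈ filePl (ferrers n stH) (k + 1), ∀ c ∈ P, c.2 ≤ n := fun P hP c hc => by
    have := mem_ferrers_stH.mp ((mem_filePl.mp hP).1 hc)
    omega
  simp only [r2Nat_eq_sum_rowFactorialProd, sum_filePl_ferrers_succ, mul_sum]
  congr 1
  · exact sum_congr rfl fun P hP => rowFactorialProd_of_le n.le_succ (hrows' P hP)
  refine sum_congr rfl fun P hP => ?_
  have hnotMem : ∀ j, (n + 1, j) ∉ P := fun j hmem => by
    have := mem_ferrers_stH.mp ((mem_filePl.mp hP).1 hmem)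
    omega
  calc ∑ j ∈ Icc 1 (stH (n + 1)), rowFactorialProd (n + 1) (insert (n + 1, j) P)
      = ∑ j ∈ Icc 1 n, ((P.filter fun d => d.2 = j).card + 1) * rowFactorialProd n P := by
        refine sum_congr rfl fun j hj => ?_
        rw [rowFactorialProd_of_le n.le_succ, rowFactorialProd_insert (hnotMem j) hj]
        intro c hc
        rcases mem_insert.mp hc with rfl | hc
        · exact (mem_Icc.mp hj).2
        · exact (mem_Icc.mp (hrows P hP c hc)).2
    _ = (n + k) * rowFactorialProd n P := by
        rw [← sum_mul, sum_card_filter_row_add_one (hrows P hP), (mem_filePl.mp hP).2.1, add_comm]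

lemma succ_descFactorial_succ_eq_add (N j : ℕ) :
    (N + 1).descFactorial (j + 1) = N.descFactorial (j + 1) + (j + 1) * N.descFactorial j := by
  rw [succ_descFactorial_succ, descFactorial_succ, ← add_mul]
  rcases le_or_gt j N with hj | hj
  · congr 1
    omega
  · rw [descFactorial_eq_zero_iff_lt.mpr hj, mul_zero, mul_zero]

lemma mul_sub_one_descFactorial (N j : ℕ) :
    N * (N - 1).descFactorial j = N.descFactorial (j + 1) := by
  cases N with
  | zero => simp
  | succ N => rw [succ_descFactorial_succ, Nat.add_sub_cancel]

lemma r2Nat_mul_eq_descFactorial (n k : ℕ) :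
    r2Nat n k * (k ! * 2 ^ k) = (n + k - 1).descFactorial (2 * k) := by
  induction n generalizing k with
  | zero =>
    cases k with
    | zero => simp [r2Nat_zero_right]
    | succ k =>
      rw [r2Nat_zero_succ, zero_mul, eq_comm, descFactorial_eq_zero_iff_lt]
      omega
  | succ n ih =>
    cases k with
    | zero => simp [r2Nat_zero_right]
    | succ k =>
      have hN : n + (k + 1) - 1 = n + k := by omega
      have hN' : n + 1 + (k + 1) - 1 = n + k + 1 := by omega
      have hk : 2 * (k + 1) = 2 * k + 1 + 1 := by ring
      calc r2Nat (n + 1) (k + 1) * ((k + 1)! * 2 ^ (k + 1))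
          = r2Nat n (k + 1) * ((k + 1)! * 2 ^ (k + 1))
            + (2 * k + 1 + 1) * ((n + k) * (r2Nat n k * (k ! * 2 ^ k))) := by
            rw [r2Nat_succ_succ, factorial_succ, pow_succ]
            ring
        _ = (n + 1 + (k + 1) - 1).descFactorial (2 * (k + 1)) := by
            rw [ih, ih, hN, hN', hk, mul_sub_one_descFactorial, succ_descFactorial_succ_eq_add]

theorem r2_staircase_eq_matching_number_general (n k : ℕ) :
    (r2Nat n k : ℚ)
      = ((n + k - 1).choose (2 * k) : ℚ) * (2 * k).factorial
          / (k.factorial * 2 ^ k) := by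
  rw [eq_div_iff (by positivity), mul_comm _ ((2 * k).factorial : ℚ)]
  exact_mod_cast (r2Nat_mul_eq_descFactorial n k).trans (descFactorial_eq_factorial_mul_choose _ _)

/-- The 2-creation rook number of the staircase board equals the k-matching number of
the complete graph on `n+k-1` vertices. -/
theorem r2_staircase_eq_matching_number (n k : ℕ) (hn : 1 ≤ n) :
    (r2Nat n k : ℚ)
      = ((n + k - 1).choose (2 * k) : ℚ) * (2 * k).factorial
          / (k.factorial * 2 ^ k) :=
  r2_staircase_eq_matching_number_general n k

end EllRook
end
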